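/- arXiv:2505.01253 — 3 statements merged into one kernel-verified Lean document; each statement's English description precedes it below -/
import Mathlib

section
/- Let k₁ ≠ k₂ be positive integers, l ≥ 0 an integer, and v₁,…,v_l positive integers. Set F₂(q) = (1−q^{2k₂−2k₁})⁻¹ · (1−q^{4k₁−2})⁻¹ · (1−q^{4k₂−2})⁻¹ · Π_{i=1}^{l} (1−q^{2v_i})⁻¹ and F̃₂(q) = (1−q^{4k₂−4k₁})⁻¹ · (1−q^{2k₁−1})⁻¹ · (1−q^{2k₂−1})⁻¹ · Π_{i=1}^{l} (1−q^{2v_i})⁻¹ in ℚ(q). Then q^{2k₁−1}·F₂(q) = (1/2)·(F̃₂(q) − F̃₂(−q)). -/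
open RatFunc in
private lemma aux_X_zpow_ne_one (n : ℤ) (hn : n ≠ 0) : (X : RatFunc ℚ) ^ n ≠ 1 := by
  have key : ∀ m : ℤ, 0 < m → (X : RatFunc ℚ) ^ m ≠ 1 := by
    intro m hm h
    rw [show m = ((m.toNat : ℕ) : ℤ) by omega, zpow_natCast, ← RatFunc.algebraMap_X,
      ← map_pow, ← map_one (algebraMap (Polynomial ℚ) (RatFunc ℚ))] at h
    have h2 := RatFunc.algebraMap_injective ℚ h
    have h3 := congrArg Polynomial.natDegree h2
    simp [Polynomial.natDegree_X_pow] at h3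
    omega
  rcases lt_or_gt_of_ne hn with h | h
  · intro hEq
    have h2 : (X : RatFunc ℚ) ^ (-n) = 1 := by rw [zpow_neg, hEq, inv_one]
    exact key (-n) (by omega) h2
  · exact key n h

open RatFunc in
private lemma aux_X_zpow_ne_neg_one (n : ℤ) (hn : n ≠ 0) : (X : RatFunc ℚ) ^ n ≠ -1 := by
  intro h
  have h2 : (X : RatFunc ℚ) ^ (n * 2) = 1 := by
    rw [zpow_mul, h]; norm_num
  exact aux_X_zpow_ne_one (n * 2) (by omega) h2

open RatFunc in
private lemma aux_one_sub_ne (n : ℤ) (hn : n ≠ 0) : (1 : RatFunc ℚ) - X ^ n ≠ 0 := by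
  intro h
  exact aux_X_zpow_ne_one n hn (sub_eq_zero.mp h).symm

open RatFunc in
private lemma aux_one_add_ne (n : ℤ) (hn : n ≠ 0) : (1 : RatFunc ℚ) + X ^ n ≠ 0 := by
  intro h
  exact aux_X_zpow_ne_neg_one n hn (by linear_combination h)

private lemma aux_two_ne : (2 : RatFunc ℚ) ≠ 0 := by
  intro h
  have h2 : algebraMap (Polynomial ℚ) (RatFunc ℚ) 2 = algebraMap (Polynomial ℚ) (RatFunc ℚ) 0 := by
    rw [map_ofNat, map_zero]; exact h
  have h3 := RatFunc.algebraMap_injective ℚ h2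
  norm_num at h3

open RatFunc in
private lemma aux_key (s u P : RatFunc ℚ) (h1s : 1 - s ≠ 0) (h1s' : 1 + s ≠ 0)
    (h1u : 1 - u ≠ 0) (h1u' : 1 + u ≠ 0) (h1t : 1 - u * s ≠ 0) (h1t' : 1 + u * s ≠ 0) :
    s * ((1 - u)⁻¹ * (1 - s * s)⁻¹ * (1 - u * s * (u * s))⁻¹ * P)
    = (1 / 2 : RatFunc ℚ) * ((1 - u * u)⁻¹ * (1 - s)⁻¹ * (1 - u * s)⁻¹ * P
        - (1 - u * u)⁻¹ * (1 - -s)⁻¹ * (1 - -(u * s))⁻¹ * P) := by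
  have hssf : ((1 : RatFunc ℚ) - s * s)⁻¹ = (1 - s)⁻¹ * (1 + s)⁻¹ := by
    rw [← mul_inv]; congr 1; ring
  have httf : ((1 : RatFunc ℚ) - u * s * (u * s))⁻¹ = (1 - u * s)⁻¹ * (1 + u * s)⁻¹ := by
    rw [← mul_inv]; congr 1; ring
  have huuf : ((1 : RatFunc ℚ) - u * u)⁻¹ = (1 - u)⁻¹ * (1 + u)⁻¹ := by
    rw [← mul_inv]; congr 1; ring
  rw [hssf, httf, huuf, sub_neg_eq_add, sub_neg_eq_add]
  have ca := mul_inv_cancel₀ h1s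
  have cb := mul_inv_cancel₀ h1s'
  have cc := mul_inv_cancel₀ h1u
  have cd := mul_inv_cancel₀ h1u'
  have ce := mul_inv_cancel₀ h1t
  have cf := mul_inv_cancel₀ h1t'
  apply mul_right_cancel₀ (mul_ne_zero (mul_ne_zero (mul_ne_zero (mul_ne_zero
    (mul_ne_zero h1s h1s') h1u) h1u') h1t) h1t')
  have hL : s * ((1-u)⁻¹ * ((1-s)⁻¹*(1+s)⁻¹) * ((1-u*s)⁻¹*(1+u*s)⁻¹) * P) *
      ((1-s)*(1+s)*(1-u)*(1+u)*(1-u*s)*(1+u*s)) = s * P * (1+u) := by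
    calc s * ((1-u)⁻¹ * ((1-s)⁻¹*(1+s)⁻¹) * ((1-u*s)⁻¹*(1+u*s)⁻¹) * P) *
        ((1-s)*(1+s)*(1-u)*(1+u)*(1-u*s)*(1+u*s))
        = s * P * (1+u) * (((1-s)*(1-s)⁻¹) * ((1+s)*(1+s)⁻¹) * ((1-u)*(1-u)⁻¹)
            * ((1-u*s)*(1-u*s)⁻¹) * ((1+u*s)*(1+u*s)⁻¹)) := by ring
      _ = s * P * (1+u) := by rw [ca, cb, cc, ce, cf]; ring
  have hR : (1/2 : RatFunc ℚ) * ((1-u)⁻¹*(1+u)⁻¹ * (1-s)⁻¹ * (1-u*s)⁻¹ * P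
        - (1-u)⁻¹*(1+u)⁻¹ * (1+s)⁻¹ * (1+u*s)⁻¹ * P) *
      ((1-s)*(1+s)*(1-u)*(1+u)*(1-u*s)*(1+u*s))
      = (1/2 : RatFunc ℚ) * (P * (1+s) * (1+u*s) - P * (1-s) * (1-u*s)) := by
    calc (1/2 : RatFunc ℚ) * ((1-u)⁻¹*(1+u)⁻¹ * (1-s)⁻¹ * (1-u*s)⁻¹ * P
          - (1-u)⁻¹*(1+u)⁻¹ * (1+s)⁻¹ * (1+u*s)⁻¹ * P) *
        ((1-s)*(1+s)*(1-u)*(1+u)*(1-u*s)*(1+u*s))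
        = (1/2 : RatFunc ℚ) * (P * (1+s) * (1+u*s) * (((1-s)*(1-s)⁻¹) * ((1-u)*(1-u)⁻¹)
              * ((1+u)*(1+u)⁻¹) * ((1-u*s)*(1-u*s)⁻¹))
            - P * (1-s) * (1-u*s) * (((1+s)*(1+s)⁻¹) * ((1-u)*(1-u)⁻¹)
              * ((1+u)*(1+u)⁻¹) * ((1+u*s)*(1+u*s)⁻¹))) := by ring
      _ = _ := by rw [ca, cb, cc, cd, ce, cf]; ring
  rw [hL, hR]
  linear_combination (-(s*P)-(s*P*u)) * inv_mul_cancel₀ aux_two_ne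

open RatFunc in
/-- For positive integers `k₁ ≠ k₂` and positive integers `v₁, …, v_l`, with
`F₂(q) = (1−q^{2k₂−2k₁})⁻¹ (1−q^{4k₁−2})⁻¹ (1−q^{4k₂−2})⁻¹ Π_i (1−q^{2v_i})⁻¹` and
`F̃₂(q) = (1−q^{4k₂−4k₁})⁻¹ (1−q^{2k₁−1})⁻¹ (1−q^{2k₂−1})⁻¹ Π_i (1−q^{2v_i})⁻¹` in `ℚ(q)`
(exponents are integers, interpreted via `zpow`), one has
`q^{2k₁−1} F₂(q) = (1/2)(F̃₂(q) − F̃₂(−q))`. -/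
theorem ratfunc_identity_s2 (k₁ k₂ : ℤ) (hk₁ : 0 < k₁) (hk₂ : 0 < k₂) (hne : k₁ ≠ k₂)
    (l : ℕ) (v : Fin l → ℕ) (hv : ∀ i, 0 < v i) :
    (X : RatFunc ℚ) ^ (2 * k₁ - 1) *
      ((1 - (X : RatFunc ℚ) ^ (2 * k₂ - 2 * k₁))⁻¹ *
        (1 - (X : RatFunc ℚ) ^ (4 * k₁ - 2))⁻¹ *
        (1 - (X : RatFunc ℚ) ^ (4 * k₂ - 2))⁻¹ *
        ∏ i, (1 - (X : RatFunc ℚ) ^ (2 * (v i : ℤ)))⁻¹)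
    = (1 / 2 : RatFunc ℚ) *
        ((1 - (X : RatFunc ℚ) ^ (4 * k₂ - 4 * k₁))⁻¹ *
          (1 - (X : RatFunc ℚ) ^ (2 * k₁ - 1))⁻¹ *
          (1 - (X : RatFunc ℚ) ^ (2 * k₂ - 1))⁻¹ *
          ∏ i, (1 - (X : RatFunc ℚ) ^ (2 * (v i : ℤ)))⁻¹
         - ((1 - (-(X : RatFunc ℚ)) ^ (4 * k₂ - 4 * k₁))⁻¹ *
            (1 - (-(X : RatFunc ℚ)) ^ (2 * k₁ - 1))⁻¹ *
            (1 - (-(X : RatFunc ℚ)) ^ (2 * k₂ - 1))⁻¹ *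
            ∏ i, (1 - (-(X : RatFunc ℚ)) ^ (2 * (v i : ℤ)))⁻¹)) := by
  have hX : (X : RatFunc ℚ) ≠ 0 := RatFunc.X_ne_zero
  have hprod : ∏ i, (1 - (-(X : RatFunc ℚ)) ^ (2 * (v i : ℤ)))⁻¹
      = ∏ i, (1 - (X : RatFunc ℚ) ^ (2 * (v i : ℤ)))⁻¹ :=
    Finset.prod_congr rfl fun i _ => by rw [Even.neg_zpow ⟨(v i : ℤ), by ring⟩]
  rw [hprod, Even.neg_zpow ⟨2 * k₂ - 2 * k₁, by ring⟩,
    Odd.neg_zpow (n := 2 * k₁ - 1) ⟨k₁ - 1, by ring⟩,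
    Odd.neg_zpow (n := 2 * k₂ - 1) ⟨k₂ - 1, by ring⟩]
  have hs2 : (X : RatFunc ℚ) ^ (4 * k₁ - 2) = X ^ (2 * k₁ - 1) * X ^ (2 * k₁ - 1) := by
    rw [← zpow_add₀ hX]; congr 1; ring
  have ht2 : (X : RatFunc ℚ) ^ (4 * k₂ - 2) = X ^ (2 * k₂ - 1) * X ^ (2 * k₂ - 1) := by
    rw [← zpow_add₀ hX]; congr 1; ring
  have hu2 : (X : RatFunc ℚ) ^ (4 * k₂ - 4 * k₁) = X ^ (2 * k₂ - 2 * k₁) * X ^ (2 * k₂ - 2 * k₁) := by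
    rw [← zpow_add₀ hX]; congr 1; ring
  have hut : (X : RatFunc ℚ) ^ (2 * k₂ - 2 * k₁) * X ^ (2 * k₁ - 1) = X ^ (2 * k₂ - 1) := by
    rw [← zpow_add₀ hX]; congr 1; ring
  rw [hs2, ht2, hu2, ← hut]
  set s := (X : RatFunc ℚ) ^ (2 * k₁ - 1) with hsdef
  set u := (X : RatFunc ℚ) ^ (2 * k₂ - 2 * k₁) with hudef
  set P := ∏ i, (1 - (X : RatFunc ℚ) ^ (2 * (v i : ℤ)))⁻¹ with hPdef
  have h1s : 1 - s ≠ 0 := aux_one_sub_ne _ (by omega)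
  have h1s' : 1 + s ≠ 0 := aux_one_add_ne _ (by omega)
  have h1u : 1 - u ≠ 0 := aux_one_sub_ne _ (by omega)
  have h1u' : 1 + u ≠ 0 := aux_one_add_ne _ (by omega)
  have h1t : 1 - u * s ≠ 0 := by rw [hut]; exact aux_one_sub_ne _ (by omega)
  have h1t' : 1 + u * s ≠ 0 := by rw [hut]; exact aux_one_add_ne _ (by omega)
  exact aux_key s u P h1s h1s' h1u h1u' h1t h1t'
end

section
/- Let k ≥ 1, l₀ ≥ 0, l₁ ≥ 0 be integers and let v_{0,1},…,v_{0,l₀} and v_{1,1},…,v_{1,l₁} be positive integers. Set F₂(q) = (1−q^{4k−2})⁻² · Π_{i=1}^{l₀} (1−q^{2v_{0,i}})⁻¹ · Π_{j=1}^{l₁} (1−q^{2v_{1,j}})⁻¹ and, for t ∈ {1,−1}, F̃₂(q,t) = (1−q^{2k−1})⁻¹ · (1−t·q^{2k−1})⁻¹ · Π_{i=1}^{l₀} (1−q^{2v_{0,i}})⁻¹ · Π_{j=1}^{l₁} (1−t·q^{2v_{1,j}})⁻¹ in ℚ(q). Then q^{2k−1}·F₂(q) = (1/4)·Σ_{a=0}^{1}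 Σ_{b=0}^{1} (−1)^a · F̃₂((−1)^a q, (−1)^b). -/
open RatFunc in
lemma one_sub_X_pow_ne_zero (n : ℕ) (hn : n ≠ 0) :
    (1 : RatFunc ℚ) - (X : RatFunc ℚ) ^ n ≠ 0 := by
  have hp : (1 - Polynomial.X ^ n : Polynomial ℚ) ≠ 0 := by
    intro h
    have := congrArg (Polynomial.eval 0) h
    simp [zero_pow hn] at this
  have := RatFunc.algebraMap_ne_zero hp
  simpa [map_sub, map_pow] using this

open RatFunc in
lemma one_add_X_pow_ne_zero (n : ℕ) (hn : n ≠ 0) :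
    (1 : RatFunc ℚ) + (X : RatFunc ℚ) ^ n ≠ 0 := by
  have hp : (1 + Polynomial.X ^ n : Polynomial ℚ) ≠ 0 := by
    intro h
    have := congrArg (Polynomial.eval 0) h
    simp [zero_pow hn] at this
  have := RatFunc.algebraMap_ne_zero hp
  simpa [map_add, map_pow] using this


open RatFunc in
/-- For `k ≥ 1` and positive integers `v_{0,1}, …, v_{0,l₀}` and `v_{1,1}, …, v_{1,l₁}`, with
`F₂(q) = (1−q^{4k−2})⁻² Π_i (1−q^{2v_{0,i}})⁻¹ Π_j (1−q^{2v_{1,j}})⁻¹` and, for `t ∈ {1,−1}`,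
`F̃₂(q,t) = (1−q^{2k−1})⁻¹ (1−t q^{2k−1})⁻¹ Π_i (1−q^{2v_{0,i}})⁻¹ Π_j (1−t q^{2v_{1,j}})⁻¹`
in `ℚ(q)`, one has
`q^{2k−1} F₂(q) = (1/4) Σ_{a=0}^{1} Σ_{b=0}^{1} (−1)^a F̃₂((−1)^a q, (−1)^b)`. -/
theorem ratfunc_identity_pair (k l₀ l₁ : ℕ) (hk : 1 ≤ k)
    (v₀ : Fin l₀ → ℕ) (hv₀ : ∀ i, 0 < v₀ i) (v₁ : Fin l₁ → ℕ) (hv₁ : ∀ j, 0 < v₁ j) :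
    (X : RatFunc ℚ) ^ (2 * k - 1) *
      (((1 - (X : RatFunc ℚ) ^ (4 * k - 2)) ^ 2)⁻¹ *
        (∏ i, (1 - (X : RatFunc ℚ) ^ (2 * v₀ i))⁻¹) *
        ∏ j, (1 - (X : RatFunc ℚ) ^ (2 * v₁ j))⁻¹)
    = (1 / 4 : RatFunc ℚ) *
        ∑ a ∈ Finset.range 2, ∑ b ∈ Finset.range 2,
          (-1 : RatFunc ℚ) ^ a *
          ((1 - ((-1 : RatFunc ℚ) ^ a * X) ^ (2 * k - 1))⁻¹ *
            (1 - (-1 : RatFunc ℚ) ^ b * ((-1 : RatFunc ℚ) ^ a * X) ^ (2 * k - 1))⁻¹ *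
            (∏ i, (1 - ((-1 : RatFunc ℚ) ^ a * X) ^ (2 * v₀ i))⁻¹) *
            ∏ j, (1 - (-1 : RatFunc ℚ) ^ b * ((-1 : RatFunc ℚ) ^ a * X) ^ (2 * v₁ j))⁻¹) := by
  have hodd : Odd (2 * k - 1) := ⟨k - 1, by omega⟩
  have hm : (1 : RatFunc ℚ) - X ^ (2 * k - 1) ≠ 0 := one_sub_X_pow_ne_zero _ (by omega)
  have hp : (1 : RatFunc ℚ) + X ^ (2 * k - 1) ≠ 0 := one_add_X_pow_ne_zero _ (by omega)
  rw [show 4 * k - 2 = (2 * k - 1) * 2 by omega, pow_mul]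
  simp only [Finset.sum_range_succ, Finset.sum_range_zero, pow_zero, pow_one, one_mul,
    neg_one_mul, hodd.neg_pow,
    show ∀ m : ℕ, (-(X : RatFunc ℚ)) ^ (2 * m) = X ^ (2 * m) from
      fun m => (even_two_mul m).neg_pow _,
    sub_neg_eq_add, neg_neg, zero_add]
  set y : RatFunc ℚ := X ^ (2 * k - 1) with hy
  set P : RatFunc ℚ := ∏ i, (1 - (X : RatFunc ℚ) ^ (2 * v₀ i))⁻¹ with hP
  set Q : RatFunc ℚ := ∏ j, (1 - (X : RatFunc ℚ) ^ (2 * v₁ j))⁻¹ with hQ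
  set Q' : RatFunc ℚ := ∏ j, (1 + (X : RatFunc ℚ) ^ (2 * v₁ j))⁻¹ with hQ'
  clear_value y P Q Q'
  rw [show (1 : RatFunc ℚ) - y ^ 2 = (1 - y) * (1 + y) by ring]
  haveI : CharZero (RatFunc ℚ) :=
    charZero_of_injective_algebraMap (algebraMap ℚ (RatFunc ℚ)).injective
  have key : ((1 : RatFunc ℚ) - y)⁻¹ * (1 - y)⁻¹ - (1 + y)⁻¹ * (1 + y)⁻¹
      = 4 * y * (((1 - y) * (1 + y)) ^ 2)⁻¹ := by
    field_simp
    ring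
  linear_combination (-(P * Q) / 4) * key
end

section
/- Let k ≥ 1 and l_{00}, l_{01}, l_{10}, l_{11} ≥ 0 be integers, and for each pair (p₁,p₀) ∈ {0,1}² let v_{p₁p₀,1},…,v_{p₁p₀,l_{p₁p₀}} be positive integers. Set F(q) = (1−q^{4k−2})⁻⁵ · Π_{p₀=0}^{1} Π_{p₁=0}^{1} Π_{i=1}^{l_{p₁p₀}} (1−q^{2v_{p₁p₀,i}})⁻¹ and, for t₀, t₁ ∈ {1,−1}, F̃(q,t₀,t₁) = (1−q^{8k−4})⁻¹ · Π_{p₀=0}^{1} Π_{p₁=0}^{1} [ (1−t₁^{p₁} t₀^{p₀} q^{2k−1})⁻¹ · Π_{i=1}^{l_{p₁p₀}} (1−t₁^{p₁} t₀^{p₀} q^{2v_{p₁p₀,i}})⁻¹ ] in ℚ(q). Then q^{2k−1}·F(q) = (1/8)·Σ_{a=0}^{1} Σ_{b₀=0}^{1} Σ_{b₁=0}^{1} (−1)^a · F̃((−1)^a q, (−1)^{b₀}, (−1)^{b₁}). -/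
/-!
Write `y = q^{2k-1}`. All other exponents are even, so `q ↦ -q` only flips the
sign of `y`. For `(b₀, b₁) ≠ (0, 0)` exactly two of the four signs `t₁^{p₁} t₀^{p₀}`
are `-1`, so the `y`-factors multiply to `(1 - y²)⁻²`, an even function of `y`, and
these terms cancel in the sum over `a`. The terms with `b₀ = b₁ = 0` leave
`(1 - y⁴)⁻¹ ((1 - y)⁻⁴ - (1 + y)⁻⁴)`, which is `8y (1 - y²)⁻⁵`.
-/

open Finset

namespace RatFunc

variable {K : Type*} [CommRing K] [IsDomain K]

theorem X_pow_sub_C_ne_zero {n : ℕ} (hn : 0 < n) (c : K) : (X : RatFunc K) ^ n - C c ≠ 0 := by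
  rw [← algebraMap_X, ← algebraMap_C, ← map_pow, ← map_sub]
  exact algebraMap_ne_zero (Polynomial.X_pow_sub_C_ne_zero hn c)

theorem one_sub_X_pow_ne_zero {n : ℕ} (hn : 0 < n) : 1 - (X : RatFunc K) ^ n ≠ 0 := by
  simpa [neg_sub] using neg_ne_zero.mpr (X_pow_sub_C_ne_zero hn (1 : K))

theorem one_add_X_pow_ne_zero {n : ℕ} (hn : 0 < n) : 1 + (X : RatFunc K) ^ n ≠ 0 := by
  simpa [add_comm, sub_eq_add_neg] using X_pow_sub_C_ne_zero hn (-1 : K)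

end RatFunc

section Field

variable {K : Type*} [Field K]

theorem eight_mul_mul_inv_one_sub_sq_pow_five {y : K} (h₁ : 1 - y ^ 2 ≠ 0)
    (h₂ : 1 + y ^ 2 ≠ 0) :
    8 * y * ((1 - y ^ 2) ^ 5)⁻¹ = (1 - y ^ 4)⁻¹ * ((1 - y)⁻¹ ^ 4 - (1 + y)⁻¹ ^ 4) := by
  have hm : 1 - y ≠ 0 := fun h => h₁ (by linear_combination (1 + y) * h)
  have hp : 1 + y ≠ 0 := fun h => h₁ (by linear_combination (1 - y) * h)
  have h₄ : 1 - y ^ 4 ≠ 0 := fun h => mul_ne_zero h₁ h₂ (by linear_combination h)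
  field_simp
  ring

theorem mul_inv_one_sub_sq_pow_five_mul_prod_eq_sum_sign_twist [CharZero K]
    {ι : Fin 2 → Fin 2 → Type*} [∀ p₁ p₀, Fintype (ι p₁ p₀)]
    {y : K} (h₁ : 1 - y ^ 2 ≠ 0) (h₂ : 1 + y ^ 2 ≠ 0)
    (w : (p₁ p₀ : Fin 2) → ι p₁ p₀ → K) :
    y * (((1 - y ^ 2) ^ 5)⁻¹ * ∏ p₀ : Fin 2, ∏ p₁ : Fin 2, ∏ i, (1 - w p₁ p₀ i)⁻¹)
    = (1 / 8 : K) *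
        ∑ a ∈ range 2, ∑ b₀ ∈ range 2, ∑ b₁ ∈ range 2,
          (-1 : K) ^ a *
          ((1 - y ^ 4)⁻¹ *
            ∏ p₀ : Fin 2, ∏ p₁ : Fin 2,
              ((1 - ((-1 : K) ^ b₁) ^ (p₁ : ℕ) * ((-1 : K) ^ b₀) ^ (p₀ : ℕ) *
                  ((-1 : K) ^ a * y))⁻¹ *
                ∏ i, (1 - ((-1 : K) ^ b₁) ^ (p₁ : ℕ) * ((-1 : K) ^ b₀) ^ (p₀ : ℕ) *
                  w p₁ p₀ i)⁻¹)) := by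
  linear_combination (norm := skip) (∏ p₀ : Fin 2, ∏ p₁ : Fin 2, ∏ i, (1 - w p₁ p₀ i)⁻¹) / 8 *
    eight_mul_mul_inv_one_sub_sq_pow_five h₁ h₂
  simp only [Fin.prod_univ_two, sum_range_succ, sum_range_zero, pow_zero, pow_one, one_mul,
    zero_add, Fin.val_zero, Fin.val_one, neg_one_mul, neg_neg, mul_one, sub_neg_eq_add]
  ring

end Field

section

variable {R : Type*} [CommMonoid R] [HasDistribNeg R]

theorem Even.neg_one_pow_mul_pow (a : ℕ) {n : ℕ} (hn : Even n) (x : R) :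
    ((-1) ^ a * x) ^ n = x ^ n := by
  rw [mul_pow, pow_right_comm, hn.neg_one_pow, one_pow, one_mul]

theorem Odd.neg_one_pow_mul_pow (a : ℕ) {n : ℕ} (hn : Odd n) (x : R) :
    ((-1) ^ a * x) ^ n = (-1) ^ a * x ^ n := by
  rw [mul_pow, pow_right_comm, hn.neg_one_pow]

end

open RatFunc in
theorem ratfunc_identity_five_general (k : ℕ) (hk : 1 ≤ k)
    (l : Fin 2 → Fin 2 → ℕ) (v : (p₁ p₀ : Fin 2) → Fin (l p₁ p₀) → ℕ) :
    (X : RatFunc ℚ) ^ (2 * k - 1) *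
      (((1 - (X : RatFunc ℚ) ^ (4 * k - 2)) ^ 5)⁻¹ *
        ∏ p₀ : Fin 2, ∏ p₁ : Fin 2, ∏ i, (1 - (X : RatFunc ℚ) ^ (2 * v p₁ p₀ i))⁻¹)
    = (1 / 8 : RatFunc ℚ) *
        ∑ a ∈ Finset.range 2, ∑ b₀ ∈ Finset.range 2, ∑ b₁ ∈ Finset.range 2,
          (-1 : RatFunc ℚ) ^ a *
          ((1 - ((-1 : RatFunc ℚ) ^ a * X) ^ (8 * k - 4))⁻¹ *
            ∏ p₀ : Fin 2, ∏ p₁ : Fin 2,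
              ((1 - ((-1 : RatFunc ℚ) ^ b₁) ^ (p₁ : ℕ) * ((-1 : RatFunc ℚ) ^ b₀) ^ (p₀ : ℕ) *
                  ((-1 : RatFunc ℚ) ^ a * X) ^ (2 * k - 1))⁻¹ *
                ∏ i, (1 - ((-1 : RatFunc ℚ) ^ b₁) ^ (p₁ : ℕ) * ((-1 : RatFunc ℚ) ^ b₀) ^ (p₀ : ℕ) *
                  ((-1 : RatFunc ℚ) ^ a * X) ^ (2 * v p₁ p₀ i))⁻¹)) := by
  have hsq : (X : RatFunc ℚ) ^ (4 * k - 2) = (X ^ (2 * k - 1)) ^ 2 := by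
    rw [← pow_mul]; congr 1; omega
  have hfourth : (X : RatFunc ℚ) ^ (8 * k - 4) = (X ^ (2 * k - 1)) ^ 4 := by
    rw [← pow_mul]; congr 1; omega
  simp only [Odd.neg_one_pow_mul_pow _ (⟨k - 1, by omega⟩ : Odd (2 * k - 1)),
    Even.neg_one_pow_mul_pow _ (⟨4 * k - 2, by omega⟩ : Even (8 * k - 4)),
    Even.neg_one_pow_mul_pow _ (even_two_mul _), hsq, hfourth]
  refine mul_inv_one_sub_sq_pow_five_mul_prod_eq_sum_sign_twist ?_ ?_ _ <;> rw [← pow_mul]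
  · exact one_sub_X_pow_ne_zero (by omega)
  · exact one_add_X_pow_ne_zero (by omega)

open RatFunc in
/-- For `k ≥ 1` and, for each `(p₁,p₀) ∈ {0,1}²`, positive integers `v_{p₁p₀,1}, …,
v_{p₁p₀,l_{p₁p₀}}`, with
`F(q) = (1−q^{4k−2})⁻⁵ Π_{p₀,p₁} Π_i (1−q^{2v_{p₁p₀,i}})⁻¹` and, for `t₀,t₁ ∈ {1,−1}`,
`F̃(q,t₀,t₁) = (1−q^{8k−4})⁻¹ Π_{p₀,p₁} [(1−t₁^{p₁}t₀^{p₀}q^{2k−1})⁻¹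
Π_i (1−t₁^{p₁}t₀^{p₀}q^{2v_{p₁p₀,i}})⁻¹]` in `ℚ(q)`, one has
`q^{2k−1} F(q) = (1/8) Σ_{a,b₀,b₁∈{0,1}} (−1)^a F̃((−1)^a q, (−1)^{b₀}, (−1)^{b₁})`. -/
theorem ratfunc_identity_five (k : ℕ) (hk : 1 ≤ k)
    (l : Fin 2 → Fin 2 → ℕ) (v : (p₁ p₀ : Fin 2) → Fin (l p₁ p₀) → ℕ)
    (hv : ∀ p₁ p₀ i, 0 < v p₁ p₀ i) :
    (X : RatFunc ℚ) ^ (2 * k - 1) *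
      (((1 - (X : RatFunc ℚ) ^ (4 * k - 2)) ^ 5)⁻¹ *
        ∏ p₀ : Fin 2, ∏ p₁ : Fin 2, ∏ i, (1 - (X : RatFunc ℚ) ^ (2 * v p₁ p₀ i))⁻¹)
    = (1 / 8 : RatFunc ℚ) *
        ∑ a ∈ Finset.range 2, ∑ b₀ ∈ Finset.range 2, ∑ b₁ ∈ Finset.range 2,
          (-1 : RatFunc ℚ) ^ a *
          ((1 - ((-1 : RatFunc ℚ) ^ a * X) ^ (8 * k - 4))⁻¹ *
            ∏ p₀ : Fin 2, ∏ p₁ : Fin 2,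
              ((1 - ((-1 : RatFunc ℚ) ^ b₁) ^ (p₁ : ℕ) * ((-1 : RatFunc ℚ) ^ b₀) ^ (p₀ : ℕ) *
                  ((-1 : RatFunc ℚ) ^ a * X) ^ (2 * k - 1))⁻¹ *
                ∏ i, (1 - ((-1 : RatFunc ℚ) ^ b₁) ^ (p₁ : ℕ) * ((-1 : RatFunc ℚ) ^ b₀) ^ (p₀ : ℕ) *
                  ((-1 : RatFunc ℚ) ^ a * X) ^ (2 * v p₁ p₀ i))⁻¹)) :=
  ratfunc_identity_five_general k hk l v
end
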